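/- Let t ≥ 3, let M be a matroid of rank r on E = {1,…,n}, and let E = E_1 ∪ ⋯ ∪ E_t be a good t-partition of M with associated integers a_1,…,a_t. Let M̄_1 be the matroid with bases B(M̄_1) = {B a base of M : |B ∩ E_1| ≥ a_1}, let M_2 have bases B(M_2) = {B a base of M : |B ∩ E_1| ≥ a_1 and |B ∩ (E_1 ∪ E_2)| ≤ a_1 + a_2}, and let M̄_2 have bases B(M̄_2) = {B a base of M : |B ∩ E_1| ≥ a_1 and |B ∩ (E_1 ∪ E_2)| ≥ a_1 + a_2}. Then B(M_2) and B(M̄_2) are each the collection of bases of a matroid on E, and P(M̄_1) = P(M_2) ∪ P(M̄_2) is a hyperplane split of P(M̄_1). -/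

import Mathlib

open Matroid Set

/-- The rank of a matroid: the supremum of the cardinalities of its independent sets. -/
noncomputable def mrk {α : Type*} (M : Matroid α) : ℕ :=
  sSup {n : ℕ | ∃ I, M.Indep I ∧ I.ncard = n}

/-- `ℬ` is the collection of bases of a matroid on the ground set `E`. -/
def IsBaseCollection {α : Type*} (E : Set α) (ℬ : Set (Set α)) : Prop :=
  ∃ N : Matroid α, N.E = E ∧ ∀ B, N.IsBase B ↔ B ∈ ℬ

/-- The 0/1 incidence vector of a set. -/
noncomputable def incVec {α : Type*} (B : Set α) : α → ℝ := B.indicator 1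

/-- The matroid base polytope: the convex hull of the incidence vectors of the bases. -/
noncomputable def basePolytope {α : Type*} (M : Matroid α) : Set (α → ℝ) :=
  convexHull ℝ {x | ∃ B, M.IsBase B ∧ x = incVec B}

/-- The union of the blocks `E_i` with `lo ≤ i < hi` (`i` is a 0-based index, so the paper's
`E_1 ∪ ⋯ ∪ E_j` is `blockU E 0 j`). -/
def blockU {α : Type*} {t : ℕ} (E : Fin t → Set α) (lo hi : ℕ) : Set α :=
  ⋃ i ∈ {i : Fin t | lo ≤ (i : ℕ) ∧ (i : ℕ) < hi}, E i

/-- The sum of the integers `a_i` with `lo ≤ i < hi` (0-based), so the paper's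
`a_1 + ⋯ + a_j` is `blockSum a 0 j`. -/
def blockSum {t : ℕ} (a : Fin t → ℕ) (lo hi : ℕ) : ℕ :=
  ∑ i ∈ Finset.univ.filter (fun i : Fin t => lo ≤ (i : ℕ) ∧ (i : ℕ) < hi), a i

/-- A good `t`-partition of a rank-`r` matroid `M`: the ground set is partitioned into blocks
`E_1, …, E_t` (here indexed by `Fin t`) with `r(M|E_i) > 1`, together with integers
`0 < a_i < r(M|E_i)` such that `(P1)` `r = a_1 + ⋯ + a_t` and conditions `(P2a)`,`(P2b)` hold. -/
def IsGoodPartition {α : Type*} {t : ℕ} (M : Matroid α) (r : ℕ)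
    (E : Fin t → Set α) (a : Fin t → ℕ) : Prop :=
  (⋃ i, E i) = M.E ∧
  Pairwise (Function.onFun Disjoint E) ∧
  (∀ i, 1 < mrk (M ↾ E i)) ∧
  (∀ i, 0 < a i ∧ a i < mrk (M ↾ E i)) ∧
  r = (∑ i, a i) ∧
  (∀ j : ℕ, 1 ≤ j → j ≤ t - 1 → ∀ X Y : Set α,
    (M ↾ blockU E 0 j).Indep X → X.ncard ≤ blockSum a 0 j →
    (M ↾ blockU E j t).Indep Y → Y.ncard ≤ blockSum a j t →
    M.Indep (X ∪ Y)) ∧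
  (∀ j k : ℕ, 1 ≤ j → j < k → k ≤ t - 1 → ∀ X Y Z : Set α,
    (M ↾ blockU E 0 j).Indep X → X.ncard ≤ blockSum a 0 j →
    (M ↾ blockU E j k).Indep Y → Y.ncard ≤ blockSum a j k →
    (M ↾ blockU E k t).Indep Z → Z.ncard ≤ blockSum a k t →
    M.Indep (X ∪ Y ∪ Z))

/-!
The two families are the bases of `M` meeting lower quotas on the nested pair
`E₁ ⊆ E₁ ∪ E₂`, resp. (after complementing `|B ∩ (E₁ ∪ E₂)| ≤ a₁ + a₂`) on the disjoint pair
`E₁`, `E₃ ∪ ⋯ ∪ E_t`. By (P2a), if a base `B₁` is tight on a quota set `S`, then `B₁ ∖ S` together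
with any `|B₁ ∩ S|` elements of another base inside `S` is again a base; so a basis exchange that
would break a tight quota can be replaced by one inside `S`, which gives the exchange axiom.

For the polytopes, the point is that cutting a base polytope by `x(S) ≤ c`, `c ∈ ℕ`, leaves the
convex hull of the bases with `|B ∩ S| ≤ c`. A point outside it is separated by some `φ`; a
Lagrange multiplier `μ ≥ 0` (intermediate value theorem) makes `φ - μ · x(S)` maximal on bases on
both sides of the hyperplane, and walking between two maximal bases by symmetric exchanges,
which move `|B ∩ S|` by at most one, yields a maximal base with `|B ∩ S| = c`, contradicting the
separation. The common face of the two pieces is `x(E₁ ∪ E₂) = a₁ + a₂`.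
-/

section Counting

variable {α : Type*} [Finite α] {B S : Set α} {e f : α} {k : ℕ}

lemma ncard_inter_add_ncard_inter_compl (B S : Set α) :
    (B ∩ S).ncard + (B ∩ Sᶜ).ncard = B.ncard := by
  rw [← sdiff_eq]; exact ncard_inter_add_ncard_sdiff_eq_ncard B S

lemma ncard_insert_diff_inter_add (he : e ∈ B) (hf : f ∉ B) (S : Set α) :
    (insert f (B \ {e}) ∩ S).ncard + ({e} ∩ S).ncard = (B ∩ S).ncard + ({f} ∩ S).ncard := by
  have hef : e ≠ f := fun h => hf (h ▸ he)
  have hunion : insert f (B \ {e}) ∩ S ∪ {e} ∩ S = B ∩ S ∪ {f} ∩ S := by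
    ext x; by_cases hx : x = e <;> by_cases hx' : x = f <;> aesop
  rw [← ncard_union_eq, hunion, ncard_union_eq]
  · exact disjoint_of_subset inter_subset_left inter_subset_left (by simpa using hf)
  · exact disjoint_of_subset inter_subset_left inter_subset_left (by simp [hef])

lemma le_ncard_insert_diff_inter (he : e ∈ B) (hf : f ∉ B) (hk : k ≤ (B ∩ S).ncard)
    (h : e ∈ S → f ∈ S ∨ k < (B ∩ S).ncard) : k ≤ (insert f (B \ {e}) ∩ S).ncard := by
  have hswap := ncard_insert_diff_inter_add he hf S
  have he1 : ({e} ∩ S).ncard ≤ 1 := (ncard_le_ncard inter_subset_left).trans (ncard_singleton e).le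
  by_cases heS : e ∈ S
  · rcases h heS with hfS | hlt
    · rw [singleton_inter_of_mem hfS, ncard_singleton] at hswap; omega
    · omega
  · rw [singleton_inter_eq_empty.2 heS, ncard_empty] at hswap; omega

end Counting

namespace Matroid

variable {α : Type*} {M : Matroid α} {B₁ B₂ : Set α} {e : α}

theorem IsBase.strong_exchange (hB₁ : M.IsBase B₁) (hB₂ : M.IsBase B₂) (he : e ∈ B₁ \ B₂) :
    ∃ f ∈ B₂ \ B₁, M.IsBase (insert f (B₁ \ {e})) ∧ M.IsBase (insert e (B₂ \ {f})) := by
  have heE : e ∈ M.E := hB₁.subset_ground he.1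
  have hecl : e ∈ M.closure B₂ := by rw [hB₂.closure_eq]; exact heE
  set C := M.fundCircuit e B₂
  have hC : M.IsCircuit C := hB₂.fundCircuit_isCircuit heE he.2
  -- `e` is spanned by `C \ {e}` but not by `B₁ \ {e}`, so `C \ {e} ⊄ cl(B₁ \ {e})`
  obtain ⟨f, ⟨hfC, hfe⟩, hfcl⟩ : ∃ f ∈ C \ {e}, f ∉ M.closure (B₁ \ {e}) := by
    by_contra! h
    refine hB₁.indep.notMem_closure_sdiff_of_mem he.1 ?_
    have := M.closure_subset_closure_of_subset_closure h
    exact this (hC.mem_closure_sdiff_singleton_of_mem (M.mem_fundCircuit e B₂))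
  have hfB₂ : f ∈ B₂ := (M.fundCircuit_subset_insert e B₂ hfC).resolve_left hfe
  have hfB₁ : f ∉ B₁ := fun h => hfcl (M.subset_closure _ (sdiff_subset.trans hB₁.subset_ground)
    ⟨h, hfe⟩)
  refine ⟨f, ⟨hfB₂, hfB₁⟩, hB₁.exchange_base_of_notMem_closure he.1 hfcl
    (hB₂.subset_ground hfB₂), hB₂.exchange_isBase_of_indep he.2 ?_⟩
  have := (hB₂.indep.mem_fundCircuit_iff hecl he.2).1 hfC
  rwa [← insert_sdiff_singleton_comm (Ne.symm hfe)] at this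

end Matroid

section Splits

variable {α : Type*} {M : Matroid α} {B B₁ B₂ I S S₁ S₂ : Set α} {e : α}
  {k l k₁ l₁ k₂ l₂ : ℕ}

/-- Condition (P2a) for the single cut `S = E_1 ∪ ⋯ ∪ E_j`, with `k = a_1 + ⋯ + a_j` and
`l = a_{j+1} + ⋯ + a_t`. -/
def SplitsAt (M : Matroid α) (S : Set α) (k l : ℕ) : Prop :=
  ∀ ⦃X Y : Set α⦄, M.Indep X → X ⊆ S → X.ncard ≤ k → M.Indep Y → Y ⊆ Sᶜ → Y.ncard ≤ l →
    M.Indep (X ∪ Y)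

lemma SplitsAt.compl (h : SplitsAt M S k l) : SplitsAt M Sᶜ l k := by
  intro X Y hX hXS hXl hY hYS hYk
  rw [union_comm]
  exact h hY (by simpa using hYS) hYk hX hXS hXl

variable [Finite α]

lemma Matroid.Indep.isBase_of_ncard_le (hI : M.Indep I) (hB : M.IsBase B)
    (h : B.ncard ≤ I.ncard) : M.IsBase I := by
  obtain ⟨B', hB', hIB'⟩ := hI.exists_isBase_superset
  rwa [eq_of_subset_of_ncard_le hIB' (by rwa [hB'.ncard_eq_ncard_of_isBase hB])]

lemma SplitsAt.exists_exchange (hS : SplitsAt M S k l)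
    (hr : ∀ B, M.IsBase B → B.ncard = k + l) (hB₁ : M.IsBase B₁) (hB₂ : M.IsBase B₂)
    (h₁ : (B₁ ∩ S).ncard = k) (h₂ : k ≤ (B₂ ∩ S).ncard) (he : e ∈ B₁ ∩ S) (heB₂ : e ∉ B₂) :
    ∃ f ∈ B₂ ∩ S, f ∉ B₁ ∧ M.IsBase (insert f (B₁ \ {e})) := by
  obtain ⟨X, hX, hXk⟩ := exists_subset_card_eq h₂
  have hY : (B₁ ∩ Sᶜ).ncard = l := by
    have := ncard_inter_add_ncard_inter_compl B₁ S
    have := hr B₁ hB₁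
    omega
  -- exchanging `e` against this base must bring in an element of `X`, as `B₁ ∩ Sᶜ ⊆ B₁`
  have hXY : M.IsBase (X ∪ (B₁ ∩ Sᶜ)) := by
    refine (hS (hB₂.indep.subset (hX.trans inter_subset_left)) (hX.trans inter_subset_right)
      hXk.le (hB₁.indep.subset inter_subset_left) inter_subset_right hY.le).isBase_of_ncard_le
      hB₁ ?_
    have hdisj : Disjoint X (B₁ ∩ Sᶜ) :=
      disjoint_of_subset (hX.trans inter_subset_right) inter_subset_right disjoint_compl_right
    rw [ncard_union_eq hdisj, hXk, hY, hr B₁ hB₁]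
  obtain ⟨f, ⟨hfXY | hfY, hfB₁⟩, hD⟩ :=
    hB₁.exchange hXY ⟨he.1, by rintro (h | h); exacts [heB₂ (hX h).1, h.2 he.2]⟩
  · exact ⟨f, hX hfXY, hfB₁, hD⟩
  · exact absurd hfY.1 hfB₁

theorem exchangeProperty_of_splitsAt (h₁ : SplitsAt M S₁ k₁ l₁) (h₂ : SplitsAt M S₂ k₂ l₂)
    (hr₁ : ∀ B, M.IsBase B → B.ncard = k₁ + l₁) (hr₂ : ∀ B, M.IsBase B → B.ncard = k₂ + l₂)
    (hS : S₁ ⊆ S₂ ∨ Disjoint S₁ S₂) :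
    ExchangeProperty (fun B => M.IsBase B ∧ k₁ ≤ (B ∩ S₁).ncard ∧ k₂ ≤ (B ∩ S₂).ncard) := by
  rintro B₁ B₂ ⟨hB₁, hq₁, hq₂⟩ ⟨hB₂, hp₁, hp₂⟩ e ⟨heB₁, heB₂⟩
  suffices ∃ f ∈ B₂ \ B₁, M.IsBase (insert f (B₁ \ {e})) ∧
      (e ∈ S₁ → f ∈ S₁ ∨ k₁ < (B₁ ∩ S₁).ncard) ∧ (e ∈ S₂ → f ∈ S₂ ∨ k₂ < (B₁ ∩ S₂).ncard) by
    obtain ⟨f, hf, hD, hf₁, hf₂⟩ := this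
    exact ⟨f, hf, hD, le_ncard_insert_diff_inter heB₁ hf.2 hq₁ hf₁,
      le_ncard_insert_diff_inter heB₁ hf.2 hq₂ hf₂⟩
  by_cases ht₁ : e ∈ S₁ ∧ (B₁ ∩ S₁).ncard = k₁
  · obtain ⟨f, hf, hfB₁, hD⟩ := h₁.exists_exchange hr₁ hB₁ hB₂ ht₁.2 hp₁ ⟨heB₁, ht₁.1⟩ heB₂
    refine ⟨f, ⟨hf.1, hfB₁⟩, hD, fun _ => .inl hf.2, fun he₂ => .inl ?_⟩
    rcases hS with hsub | hdisj
    · exact hsub hf.2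
    · exact absurd he₂ (hdisj.notMem_of_mem_left ht₁.1)
  have hlt₁ : e ∈ S₁ → k₁ < (B₁ ∩ S₁).ncard := fun he₁ => hq₁.lt_of_ne fun h => ht₁ ⟨he₁, h.symm⟩
  by_cases ht₂ : e ∈ S₂ ∧ (B₁ ∩ S₂).ncard = k₂
  · obtain ⟨f, hf, hfB₁, hD⟩ := h₂.exists_exchange hr₂ hB₁ hB₂ ht₂.2 hp₂ ⟨heB₁, ht₂.1⟩ heB₂
    exact ⟨f, ⟨hf.1, hfB₁⟩, hD, fun he₁ => .inr (hlt₁ he₁), fun _ => .inl hf.2⟩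
  have hlt₂ : e ∈ S₂ → k₂ < (B₁ ∩ S₂).ncard := fun he₂ => hq₂.lt_of_ne fun h => ht₂ ⟨he₂, h.symm⟩
  obtain ⟨f, hf, hD⟩ := hB₁.exchange hB₂ ⟨heB₁, heB₂⟩
  exact ⟨f, hf, hD, fun he₁ => .inr (hlt₁ he₁), fun he₂ => .inr (hlt₂ he₂)⟩

lemma isBaseCollection_of_exchangeProperty {E : Set α} {P : Set α → Prop}
    (hP : ExchangeProperty P) (hne : ∃ B, P B) (hE : ∀ B, P B → B ⊆ E) :
    IsBaseCollection E {B | P B} :=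
  ⟨Matroid.ofIsBaseOfFinite (toFinite E) P hne hP hE, rfl, fun _ => Iff.rfl⟩

end Splits

section MaxWeight

variable {α : Type*} {N : Matroid α} {F : (α → ℝ) →ₗ[ℝ] ℝ} {B B₁ B₂ S : Set α} {e f : α}

lemma incVec_insert_diff_add (he : e ∈ B) (hf : f ∉ B) :
    incVec (insert f (B \ {e})) + incVec {e} = incVec B + incVec {f} := by
  have hef : e ≠ f := fun h => hf (h ▸ he)
  have hunion : insert f (B \ {e}) ∪ {e} = B ∪ {f} := by
    ext x; by_cases hx : x = e <;> by_cases hx' : x = f <;> aesop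
  have h₁ := indicator_union_of_disjoint (s := insert f (B \ {e})) (t := {e}) (by simp [hef])
    (1 : α → ℝ)
  have h₂ := indicator_union_of_disjoint (s := B) (t := {f}) (by simpa using hf) (1 : α → ℝ)
  funext i
  have := congrFun h₁ i
  rw [hunion, h₂] at this
  exact this.symm

def IsMaxWeightBase (N : Matroid α) (F : (α → ℝ) →ₗ[ℝ] ℝ) (B : Set α) : Prop :=
  N.IsBase B ∧ ∀ B', N.IsBase B' → F (incVec B') ≤ F (incVec B)

/-- The symmetric exchange forces the two swapped elements to have equal weight. -/
lemma IsMaxWeightBase.exchange (h₁ : IsMaxWeightBase N F B₁) (h₂ : IsMaxWeightBase N F B₂)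
    (he : e ∈ B₁ \ B₂) : ∃ f ∈ B₂ \ B₁, IsMaxWeightBase N F (insert f (B₁ \ {e})) := by
  obtain ⟨f, hf, hD, hD'⟩ := h₁.1.strong_exchange h₂.1 he
  have hw₁ := congrArg F (incVec_insert_diff_add he.1 hf.2)
  have hw₂ := congrArg F (incVec_insert_diff_add hf.1 he.2)
  simp only [map_add] at hw₁ hw₂
  refine ⟨f, hf, hD, fun B hB => ?_⟩
  linarith [h₁.2 B hB, h₁.2 B₂ h₂.1, h₂.2 _ hD']

variable [Finite α]

lemma IsMaxWeightBase.exists_ncard_inter_eq {c : ℕ} (h₁ : IsMaxWeightBase N F B₁)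
    (h₂ : IsMaxWeightBase N F B₂) (hc₁ : c ≤ (B₁ ∩ S).ncard) (hc₂ : (B₂ ∩ S).ncard ≤ c) :
    ∃ D, IsMaxWeightBase N F D ∧ (D ∩ S).ncard = c := by
  induction hk : (B₁ \ B₂).ncard using Nat.strong_induction_on generalizing B₁ with
  | _ k ih =>
  obtain hc | hc := hc₁.eq_or_lt
  · exact ⟨B₁, h₁, hc.symm⟩
  obtain ⟨e, ⟨heB₁, heS⟩, heB₂⟩ : ∃ e ∈ B₁ ∩ S, e ∉ B₂ := by
    by_contra! h
    have := ncard_le_ncard (show B₁ ∩ S ⊆ B₂ ∩ S from fun x hx => ⟨h x hx, hx.2⟩)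
    omega
  obtain ⟨f, hf, hD⟩ := h₁.exchange h₂ ⟨heB₁, heB₂⟩
  have hlt : (insert f (B₁ \ {e}) \ B₂).ncard < k := by
    rw [← hk]
    refine ncard_lt_ncard ((ssubset_iff_of_subset ?_).2 ⟨e, ⟨heB₁, heB₂⟩, fun h => ?_⟩)
    · rintro x ⟨rfl | ⟨hx, -⟩, hxB₂⟩
      exacts [absurd hf.1 hxB₂, ⟨hx, hxB₂⟩]
    · rcases h.1 with rfl | ⟨-, he⟩
      exacts [heB₂ hf.1, he rfl]
  exact ih _ hlt hD (le_ncard_insert_diff_inter heB₁ hf.2 hc.le fun _ => .inr hc) rfl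

end MaxWeight

section BasePolytope

variable {α : Type*} {N : Matroid α} {x : α → ℝ}

lemma map_le_of_mem_basePolytope (F : (α → ℝ) →ₗ[ℝ] ℝ) {m : ℝ}
    (h : ∀ B, N.IsBase B → F (incVec B) ≤ m) (hx : x ∈ basePolytope N) : F x ≤ m :=
  convexHull_min (by rintro _ ⟨B, hB, rfl⟩; exact h B hB) (convex_halfSpace_le F.isLinear m) hx

lemma le_map_of_mem_basePolytope (F : (α → ℝ) →ₗ[ℝ] ℝ) {m : ℝ}
    (h : ∀ B, N.IsBase B → m ≤ F (incVec B)) (hx : x ∈ basePolytope N) : m ≤ F x :=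
  convexHull_min (by rintro _ ⟨B, hB, rfl⟩; exact h B hB) (convex_halfSpace_ge F.isLinear m) hx

lemma isExtreme_sep_le {E : Type*} [AddCommGroup E] [Module ℝ E] {K : Set E} (F : E →ₗ[ℝ] ℝ)
    {m : ℝ} (hK : ∀ y ∈ K, m ≤ F y) : IsExtreme ℝ K {y ∈ K | F y ≤ m} := by
  refine ⟨sep_subset _ _, fun y₁ hy₁ y₂ hy₂ z hz ⟨a, b, ha, hb, hab, hz'⟩ => ⟨hy₁, ?_⟩⟩
  have := hz.2
  rw [← hz', map_add, map_smul, map_smul, smul_eq_mul, smul_eq_mul] at this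
  by_contra! h
  have hm : (a + b) * m = m := by rw [hab, one_mul]
  nlinarith [mul_le_mul_of_nonneg_left (hK y₂ hy₂) hb.le, mul_lt_mul_of_pos_left h ha]

variable [Fintype α]

open scoped Classical in
noncomputable def sumOn (S : Set α) : (α → ℝ) →ₗ[ℝ] ℝ :=
  ∑ i ∈ S.toFinset, LinearMap.proj i

lemma sumOn_incVec (S B : Set α) : sumOn S (incVec B) = (B ∩ S).ncard := by
  classical
  simp only [sumOn, incVec, LinearMap.coe_sum, LinearMap.coe_proj, Finset.sum_apply,
    Function.eval, indicator_apply, Pi.one_apply, Finset.sum_boole, Nat.cast_inj]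
  rw [ncard_eq_toFinset_card']
  congr 1
  ext
  simp [and_comm]

lemma exists_sup'_eq_sup' {ι : Type*} {H L : Finset ι} (hH : H.Nonempty) (hL : L.Nonempty)
    (p s : ι → ℝ) {k : ℝ} (hsH : ∀ i ∈ H, k + 1 ≤ s i) (hsL : ∀ i ∈ L, s i ≤ k)
    (h0 : L.sup' hL p < H.sup' hH p) :
    ∃ μ, 0 ≤ μ ∧ H.sup' hH (fun i => p i - μ * s i) = L.sup' hL (fun i => p i - μ * s i) := by
  let g : ℝ → ℝ := fun μ =>
    H.sup' hH (fun i => p i - μ * s i) - L.sup' hL (fun i => p i - μ * s i)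
  have hcont : Continuous g :=
    .sub (.finset_sup'_apply hH fun i _ => by fun_prop)
      (.finset_sup'_apply hL fun i _ => by fun_prop)
  have hg0 : g 0 = H.sup' hH p - L.sup' hL p := by simp [g]
  have hdec : ∀ μ, 0 ≤ μ → g μ ≤ g 0 - μ := by
    intro μ hμ
    have hu : H.sup' hH (fun i => p i - μ * s i) ≤ H.sup' hH p - μ * (k + 1) :=
      Finset.sup'_le _ _ fun i hi => by nlinarith [Finset.le_sup' p hi, hsH i hi]
    obtain ⟨j, hj, hpj⟩ := Finset.exists_mem_eq_sup' hL p
    have hv := Finset.le_sup' (fun i => p i - μ * s i) hj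
    nlinarith [hsL j hj]
  obtain ⟨μ, ⟨hμ, -⟩, hgμ⟩ := intermediate_value_Icc' (a := 0) (b := g 0) (by linarith)
    hcont.continuousOn (show (0 : ℝ) ∈ Icc (g (g 0)) (g 0) from
      ⟨by linarith [hdec _ (by linarith : 0 ≤ g 0)], by linarith⟩)
  exact ⟨μ, hμ, sub_eq_zero.1 hgμ⟩

/-- `μ` is a Lagrange multiplier for the constraint `x(S) ≤ c`. -/
lemma exists_isMaxWeightBase_of_forall_lt (φ : (α → ℝ) →ₗ[ℝ] ℝ) (S : Set α) (c : ℕ)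
    (hlow : ∃ B, N.IsBase B ∧ (B ∩ S).ncard ≤ c)
    (hhigh : ∀ B, IsMaxWeightBase N φ B → c < (B ∩ S).ncard) :
    ∃ μ : ℝ, 0 ≤ μ ∧ ∃ B₁ B₂, IsMaxWeightBase N (φ - μ • sumOn S) B₁ ∧
      IsMaxWeightBase N (φ - μ • sumOn S) B₂ ∧ c < (B₁ ∩ S).ncard ∧ (B₂ ∩ S).ncard ≤ c := by
  let H := (toFinite {B | N.IsBase B ∧ c < (B ∩ S).ncard}).toFinset
  let L := (toFinite {B | N.IsBase B ∧ (B ∩ S).ncard ≤ c}).toFinset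
  have hmemH : ∀ B, B ∈ H ↔ N.IsBase B ∧ c < (B ∩ S).ncard := fun _ => Finite.mem_toFinset _
  have hmemL : ∀ B, B ∈ L ↔ N.IsBase B ∧ (B ∩ S).ncard ≤ c := fun _ => Finite.mem_toFinset _
  obtain ⟨B₀, hB₀, hB₀max⟩ := exists_max_image {B | N.IsBase B} (fun B => φ (incVec B))
    (toFinite _) N.exists_isBase
  have hB₀H : B₀ ∈ H := (hmemH B₀).2 ⟨hB₀, hhigh B₀ ⟨hB₀, hB₀max⟩⟩
  obtain ⟨L₀, hL₀⟩ := hlow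
  have hL : L.Nonempty := ⟨L₀, (hmemL L₀).2 hL₀⟩
  let p : Set α → ℝ := fun B => φ (incVec B)
  let s : Set α → ℝ := fun B => (B ∩ S).ncard
  have h0 : L.sup' hL p < H.sup' ⟨B₀, hB₀H⟩ p := by
    obtain ⟨L₁, hL₁, hp⟩ := Finset.exists_mem_eq_sup' hL p
    have hL₁' := (hmemL L₁).1 hL₁
    refine hp ▸ lt_of_lt_of_le (lt_of_not_ge fun h => ?_) (Finset.le_sup' p hB₀H)
    exact (hhigh L₁ ⟨hL₁'.1, fun B hB => (hB₀max B hB).trans h⟩).not_ge hL₁'.2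
  obtain ⟨μ, hμ, hμeq⟩ := exists_sup'_eq_sup' ⟨B₀, hB₀H⟩ hL p s (k := (c : ℝ))
    (fun B hB => show (c : ℝ) + 1 ≤ (B ∩ S).ncard by exact_mod_cast ((hmemH B).1 hB).2)
    (fun B hB => show ((B ∩ S).ncard : ℝ) ≤ c by exact_mod_cast ((hmemL B).1 hB).2) h0
  have hwt : ∀ B, (φ - μ • sumOn S) (incVec B) = p B - μ * s B := by simp [p, s, sumOn_incVec]
  obtain ⟨B₁, hB₁, hu⟩ := Finset.exists_mem_eq_sup' ⟨B₀, hB₀H⟩ fun B => p B - μ * s B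
  obtain ⟨B₂, hB₂, hv⟩ := Finset.exists_mem_eq_sup' hL fun B => p B - μ * s B
  have hmax : ∀ B, N.IsBase B → p B - μ * s B ≤ p B₁ - μ * s B₁ := fun B hB => by
    rcases lt_or_ge c (B ∩ S).ncard with h | h
    · exact (Finset.le_sup' (fun B => p B - μ * s B) ((hmemH B).2 ⟨hB, h⟩)).trans hu.le
    · exact (Finset.le_sup' (fun B => p B - μ * s B) ((hmemL B).2 ⟨hB, h⟩)).trans
        (hμeq.symm.trans hu).le
  refine ⟨μ, hμ, B₁, B₂, ⟨((hmemH B₁).1 hB₁).1, fun B hB => ?_⟩,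
    ⟨((hmemL B₂).1 hB₂).1, fun B hB => ?_⟩, ((hmemH B₁).1 hB₁).2, ((hmemL B₂).1 hB₂).2⟩
  · rw [hwt, hwt]; exact hmax B hB
  · rw [hwt, hwt, ← hv, ← hμeq, hu]; exact hmax B hB

end BasePolytope

section HyperplaneSplit

variable {α : Type*} [Fintype α] {N N' N₁ N₂ : Matroid α} {S : Set α} {c d : ℕ} {x : α → ℝ}

lemma isClosed_basePolytope (N : Matroid α) : IsClosed (basePolytope N) := by
  have hfin : {y | ∃ B, N.IsBase B ∧ y = incVec B}.Finite :=
    (finite_range incVec).subset fun _ ⟨B, _, hy⟩ => ⟨B, hy.symm⟩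
  exact hfin.isClosed_convexHull ℝ

theorem mem_basePolytope_of_sumOn_le
    (hN' : ∀ B, N'.IsBase B ↔ N.IsBase B ∧ (B ∩ S).ncard ≤ c) (hx : x ∈ basePolytope N)
    (hxS : sumOn S x ≤ c) : x ∈ basePolytope N' := by
  by_contra hx'
  obtain ⟨φ, s, hφ, hs⟩ :=
    geometric_hahn_banach_closed_point (convex_convexHull ℝ _) (isClosed_basePolytope N') hx'
  obtain ⟨μ, hμ, D, hD, hDc, hslack⟩ : ∃ μ : ℝ, 0 ≤ μ ∧ ∃ D,
      IsMaxWeightBase N ((φ : (α → ℝ) →ₗ[ℝ] ℝ) - μ • sumOn S) D ∧ (D ∩ S).ncard ≤ c ∧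
        (μ = 0 ∨ (D ∩ S).ncard = c) := by
    by_cases h0 : ∃ D, IsMaxWeightBase N φ D ∧ (D ∩ S).ncard ≤ c
    · obtain ⟨D, hD, hDc⟩ := h0
      exact ⟨0, le_rfl, D, by simpa using hD, hDc, .inl rfl⟩
    push Not at h0
    obtain ⟨B', hB'⟩ := N'.exists_isBase
    obtain ⟨μ, hμ, B₁, B₂, h₁, h₂, hc₁, hc₂⟩ :=
      exists_isMaxWeightBase_of_forall_lt φ S c ⟨B', (hN' B').1 hB'⟩ h0
    obtain ⟨D, hD, hDc⟩ := h₁.exists_ncard_inter_eq h₂ hc₁.le hc₂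
    exact ⟨μ, hμ, D, hD, hDc.le, .inr hDc⟩
  have hxD := map_le_of_mem_basePolytope _ hD.2 hx
  have hφD : φ (incVec D) < s := hφ _ (subset_convexHull ℝ _ ⟨D, (hN' D).2 ⟨hD.1, hDc⟩, rfl⟩)
  have hμD : μ * (D ∩ S).ncard = μ * c := by rcases hslack with rfl | h <;> simp [*]
  simp only [LinearMap.sub_apply, LinearMap.smul_apply, smul_eq_mul, sumOn_incVec,
    ContinuousLinearMap.coe_coe] at hxD
  -- `φ x ≤ φ x - μ (x(S) - c) ≤ φ(1_D) - μ (|D ∩ S| - c) = φ(1_D) < s < φ x`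
  nlinarith [mul_le_mul_of_nonneg_left hxS hμ]

variable (hr : ∀ B, N.IsBase B → B.ncard = c + d)
  (h₁ : ∀ B, N₁.IsBase B ↔ N.IsBase B ∧ (B ∩ S).ncard ≤ c)
  (h₂ : ∀ B, N₂.IsBase B ↔ N.IsBase B ∧ (B ∩ Sᶜ).ncard ≤ d)
include hr

lemma sumOn_add_sumOn_compl_of_mem_basePolytope (hx : x ∈ basePolytope N) :
    sumOn S x + sumOn Sᶜ x = c + d := by
  have hvert : ∀ B, N.IsBase B → (sumOn S + sumOn Sᶜ) (incVec B) = c + d := fun B hB => by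
    rw [LinearMap.add_apply, sumOn_incVec, sumOn_incVec, ← Nat.cast_add,
      ncard_inter_add_ncard_inter_compl, hr B hB, Nat.cast_add]
  exact le_antisymm (map_le_of_mem_basePolytope _ (fun B hB => (hvert B hB).le) hx)
    (le_map_of_mem_basePolytope _ (fun B hB => (hvert B hB).ge) hx)

include h₁ h₂

lemma basePolytope_eq_union : basePolytope N = basePolytope N₁ ∪ basePolytope N₂ := by
  refine subset_antisymm (fun x hx => ?_) (union_subset (convexHull_mono ?_) (convexHull_mono ?_))
  · rcases le_or_gt (sumOn S x) c with h | h
    · exact .inl (mem_basePolytope_of_sumOn_le h₁ hx h)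
    · refine .inr (mem_basePolytope_of_sumOn_le h₂ hx ?_)
      linarith [sumOn_add_sumOn_compl_of_mem_basePolytope (S := S) hr hx]
  · rintro _ ⟨B, hB, rfl⟩; exact ⟨B, ((h₁ B).1 hB).1, rfl⟩
  · rintro _ ⟨B, hB, rfl⟩; exact ⟨B, ((h₂ B).1 hB).1, rfl⟩

lemma basePolytope_ssubset_and_isExtreme (hhi : ∃ B, N.IsBase B ∧ c < (B ∩ S).ncard) :
    basePolytope N₁ ⊂ basePolytope N ∧
      IsExtreme ℝ (basePolytope N₁) (basePolytope N₁ ∩ basePolytope N₂) := by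
  have hsub : basePolytope N₁ ⊆ basePolytope N :=
    convexHull_mono (by rintro _ ⟨B, hB, rfl⟩; exact ⟨B, ((h₁ B).1 hB).1, rfl⟩)
  have hN₁S : ∀ y ∈ basePolytope N₁, sumOn S y ≤ c := fun y => map_le_of_mem_basePolytope _
    fun B hB => by rw [sumOn_incVec]; exact_mod_cast ((h₁ B).1 hB).2
  have hN₁Sc : ∀ y ∈ basePolytope N₁, (d : ℝ) ≤ sumOn Sᶜ y := fun y => le_map_of_mem_basePolytope _
    fun B hB => by
      have := ncard_inter_add_ncard_inter_compl B S
      have := hr B ((h₁ B).1 hB).1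
      have := ((h₁ B).1 hB).2
      rw [sumOn_incVec]; exact_mod_cast (by omega : d ≤ (B ∩ Sᶜ).ncard)
  have hN₂Sc : ∀ y ∈ basePolytope N₂, sumOn Sᶜ y ≤ d := fun y => map_le_of_mem_basePolytope _
    fun B hB => by rw [sumOn_incVec]; exact_mod_cast ((h₂ B).1 hB).2
  refine ⟨(ssubset_iff_of_subset hsub).2 ?_, ?_⟩
  · obtain ⟨B, hB, hBS⟩ := hhi
    refine ⟨incVec B, subset_convexHull ℝ _ ⟨B, hB, rfl⟩, fun h => ?_⟩
    have := hN₁S _ h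
    rw [sumOn_incVec] at this
    exact hBS.not_ge (by exact_mod_cast this)
  · have : basePolytope N₁ ∩ basePolytope N₂ = {y ∈ basePolytope N₁ | sumOn Sᶜ y ≤ d} :=
      subset_antisymm (fun y hy => ⟨hy.1, hN₂Sc y hy.2⟩)
        (fun y hy => ⟨hy.1, mem_basePolytope_of_sumOn_le h₂ (hsub hy.1) hy.2⟩)
    rw [this]
    exact isExtreme_sep_le _ hN₁Sc

end HyperplaneSplit

theorem basePolytope_hyperplane_split {α : Type*} [Fintype α] {N N₁ N₂ : Matroid α} {S : Set α}
    {c d : ℕ} (hr : ∀ B, N.IsBase B → B.ncard = c + d)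
    (h₁ : ∀ B, N₁.IsBase B ↔ N.IsBase B ∧ (B ∩ S).ncard ≤ c)
    (h₂ : ∀ B, N₂.IsBase B ↔ N.IsBase B ∧ c ≤ (B ∩ S).ncard)
    (hlo : ∃ B, N.IsBase B ∧ (B ∩ S).ncard < c) (hhi : ∃ B, N.IsBase B ∧ c < (B ∩ S).ncard) :
    basePolytope N = basePolytope N₁ ∪ basePolytope N₂ ∧
      basePolytope N₁ ⊂ basePolytope N ∧ basePolytope N₂ ⊂ basePolytope N ∧
      IsExtreme ℝ (basePolytope N₁) (basePolytope N₁ ∩ basePolytope N₂) ∧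
      IsExtreme ℝ (basePolytope N₂) (basePolytope N₁ ∩ basePolytope N₂) := by
  have hcompl : ∀ B, N.IsBase B → (c ≤ (B ∩ S).ncard ↔ (B ∩ Sᶜ).ncard ≤ d) := fun B hB => by
    have := ncard_inter_add_ncard_inter_compl B S
    have := hr B hB
    omega
  have h₂' : ∀ B, N₂.IsBase B ↔ N.IsBase B ∧ (B ∩ Sᶜ).ncard ≤ d := fun B => by
    rw [h₂]; exact and_congr_right (hcompl B)
  have h₁' : ∀ B, N₁.IsBase B ↔ N.IsBase B ∧ (B ∩ Sᶜᶜ).ncard ≤ c := by simpa using h₁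
  obtain ⟨hss₁, hext₁⟩ := basePolytope_ssubset_and_isExtreme hr h₁ h₂' hhi
  obtain ⟨B, hB, hBS⟩ := hlo
  obtain ⟨hss₂, hext₂⟩ := basePolytope_ssubset_and_isExtreme (S := Sᶜ)
    (fun B hB => (hr B hB).trans (add_comm c d)) h₂' h₁'
    ⟨B, hB, lt_of_not_ge fun h => hBS.not_ge ((hcompl B hB).2 h)⟩
  exact ⟨basePolytope_eq_union hr h₁ h₂', hss₁, hss₂, hext₁, inter_comm (basePolytope N₁) _ ▸ hext₂⟩

section Blocks

variable {α : Type*} {t : ℕ} {E : Fin t → Set α} {a : Fin t → ℕ} {lo hi lo' hi' mid : ℕ}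

lemma mem_blockU {x : α} :
    x ∈ blockU E lo hi ↔ ∃ i : Fin t, (lo ≤ i ∧ (i : ℕ) < hi) ∧ x ∈ E i := by
  simp [blockU]

lemma blockU_mono (hlo : lo ≤ lo') (hhi : hi' ≤ hi) : blockU E lo' hi' ⊆ blockU E lo hi :=
  fun _ hx => by
    obtain ⟨i, hi, hx⟩ := mem_blockU.1 hx
    exact mem_blockU.2 ⟨i, ⟨by omega, by omega⟩, hx⟩

lemma blockU_succ (i : Fin t) : blockU E i (i + 1) = E i := by
  ext x
  refine ⟨fun hx => ?_, fun hx => mem_blockU.2 ⟨i, ⟨le_rfl, by omega⟩, hx⟩⟩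
  obtain ⟨j, hj, hx⟩ := mem_blockU.1 hx
  rwa [← Fin.ext (by omega : (j : ℕ) = i)]

lemma disjoint_blockU (hE : Pairwise (Function.onFun Disjoint E)) (h : hi ≤ lo') :
    Disjoint (blockU E lo hi) (blockU E lo' hi') := by
  refine disjoint_left.2 fun x hx hx' => ?_
  obtain ⟨i, hi, hxi⟩ := mem_blockU.1 hx
  obtain ⟨j, hj, hxj⟩ := mem_blockU.1 hx'
  exact disjoint_left.1 (hE (Fin.ne_of_lt (by omega : i < j))) hxi hxj

lemma subset_blockU_of_subset_compl {Y : Set α} {j : ℕ} (hY : Y ⊆ ⋃ i, E i)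
    (hYj : Y ⊆ (blockU E 0 j)ᶜ) : Y ⊆ blockU E j t := fun y hy => by
  obtain ⟨i, hyi⟩ := mem_iUnion.1 (hY hy)
  refine mem_blockU.2 ⟨i, ⟨le_of_not_gt fun hij => hYj hy ?_, i.isLt⟩, hyi⟩
  exact mem_blockU.2 ⟨i, ⟨Nat.zero_le _, hij⟩, hyi⟩

lemma blockSum_add (h₁ : lo ≤ mid) (h₂ : mid ≤ hi) :
    blockSum a lo mid + blockSum a mid hi = blockSum a lo hi := by
  rw [blockSum, blockSum, blockSum, ← Finset.sum_union]
  · congr 1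
    ext i
    simp only [Finset.mem_union, Finset.mem_filter, Finset.mem_univ, true_and]
    omega
  · exact Finset.disjoint_left.2 fun i hi hi' => by simp at hi hi'; omega

lemma blockSum_succ (i : Fin t) : blockSum a i (i + 1) = a i := by
  rw [blockSum, Finset.sum_eq_single_of_mem i (by simp)]
  intro j hj hji
  simp only [Finset.mem_filter, Finset.mem_univ, true_and] at hj
  exact absurd (Fin.ext (by omega)) hji

lemma blockSum_zero_eq_sum : blockSum a 0 t = ∑ i, a i := by
  simp [blockSum]

lemma blockSum_pos (ha : ∀ i, 0 < a i) (h : lo < hi) (ht : hi ≤ t) : 0 < blockSum a lo hi := by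
  rw [← blockSum_add (mid := lo + 1) (by omega) h]
  have hsucc : blockSum a lo (lo + 1) = a ⟨lo, by omega⟩ := blockSum_succ ⟨lo, by omega⟩
  have := ha ⟨lo, by omega⟩
  omega

end Blocks

section Rank

variable {α : Type*} [Finite α] {M : Matroid α} {B : Set α} {k : ℕ}

lemma Matroid.IsBase.ncard_eq_mrk (hB : M.IsBase B) : B.ncard = mrk M := by
  have hle : ∀ n ∈ {n | ∃ I, M.Indep I ∧ I.ncard = n}, n ≤ B.ncard := by
    rintro _ ⟨I, hI, rfl⟩
    obtain ⟨B', hB', hIB'⟩ := hI.exists_isBase_superset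
    exact (ncard_le_ncard hIB').trans (hB'.ncard_eq_ncard_of_isBase hB).le
  exact le_antisymm (le_csSup ⟨_, hle⟩ ⟨B, hB.indep, rfl⟩) (csSup_le ⟨_, B, hB.indep, rfl⟩ hle)

lemma exists_indep_ncard_eq_of_le_mrk (h : k ≤ mrk M) : ∃ I, M.Indep I ∧ I.ncard = k := by
  obtain ⟨B, hB⟩ := M.exists_isBase
  obtain ⟨I, hIB, hI⟩ := exists_subset_card_eq (hB.ncard_eq_mrk ▸ h)
  exact ⟨I, hB.indep.subset hIB, hI⟩

end Rank

namespace IsGoodPartition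

variable {α : Type*} {M : Matroid α} {t r : ℕ} {E : Fin t → Set α} {a : Fin t → ℕ}
  (hgood : IsGoodPartition M r E a)
include hgood

lemma splitsAt {j : ℕ} (hj : 1 ≤ j) (hjt : j ≤ t - 1) :
    SplitsAt M (blockU E 0 j) (blockSum a 0 j) (blockSum a j t) :=
  fun X Y hX hXS hXk hY hYS hYl => hgood.2.2.2.2.2.1 j hj hjt X Y
    (restrict_indep_iff.2 ⟨hX, hXS⟩) hXk
    (restrict_indep_iff.2 ⟨hY, subset_blockU_of_subset_compl
      (hY.subset_ground.trans hgood.1.symm.subset) hYS⟩) hYl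

lemma blockSum_add_eq {j : ℕ} (hj : j ≤ t) : blockSum a 0 j + blockSum a j t = r := by
  rw [blockSum_add (Nat.zero_le j) hj, blockSum_zero_eq_sum, hgood.2.2.2.2.1]

lemma blockSum_pos {lo hi : ℕ} (h : lo < hi) (ht : hi ≤ t) : 0 < blockSum a lo hi :=
  _root_.blockSum_pos (fun i => (hgood.2.2.2.1 i).1) h ht

variable [Finite α]

lemma exists_indep_blockU_succ (i : Fin t) :
    ∃ X, M.Indep X ∧ X ⊆ blockU E i (i + 1) ∧ X.ncard = blockSum a i (i + 1) + 1 := by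
  obtain ⟨X, hX, hXk⟩ := exists_indep_ncard_eq_of_le_mrk (hgood.2.2.2.1 i).2
  rw [restrict_indep_iff] at hX
  exact ⟨X, hX.1, (blockU_succ i).symm ▸ hX.2, (blockSum_succ i).symm ▸ hXk⟩

/-- Each new block `E_k` contributes an independent set of size `a_k`, which (P2a) glues to the
one already built inside `E_{j+1} ∪ ⋯ ∪ E_k`. -/
lemma exists_indep_blockU {j k : ℕ} (hj : 1 ≤ j) (hjk : j < k) (hk : k ≤ t) :
    ∃ W, M.Indep W ∧ W ⊆ blockU E j k ∧ W.ncard = blockSum a j k + 1 := by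
  induction k, hjk using Nat.le_induction with
  | base => exact hgood.exists_indep_blockU_succ ⟨j, by omega⟩
  | succ k hjk ih =>
    obtain ⟨W, hW, hWjk, hWk⟩ := ih (by omega)
    obtain ⟨X', hX', hX'k, hX'c⟩ : ∃ X, M.Indep X ∧ X ⊆ blockU E k (k + 1) ∧
        X.ncard = blockSum a k (k + 1) + 1 := hgood.exists_indep_blockU_succ ⟨k, by omega⟩
    obtain ⟨X, hXX', hXc⟩ := exists_subset_card_eq (show blockSum a k (k + 1) ≤ X'.ncard by omega)
    have hWk' : W ⊆ blockU E 0 k := hWjk.trans (blockU_mono (Nat.zero_le _) le_rfl)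
    have hXk : X ⊆ (blockU E 0 k)ᶜ := (hXX'.trans hX'k).trans
      (disjoint_blockU hgood.2.1 le_rfl).subset_compl_left
    have hsum := blockSum_add (a := a) (Nat.zero_le j) (by omega : j ≤ k)
    have hpos := hgood.blockSum_pos (lo := 0) (hi := j) (by omega) (by omega)
    have hsum' := blockSum_add (a := a) (lo := k) (mid := k + 1) (hi := t) (by omega) (by omega)
    have hind : M.Indep (W ∪ X) := hgood.splitsAt (j := k) (by omega) (by omega) hW hWk'
      (by omega) (hX'.subset hXX') hXk (by omega)
    have hsub : W ∪ X ⊆ blockU E j (k + 1) :=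
      union_subset (hWjk.trans (blockU_mono le_rfl (Nat.le_succ k)))
        ((hXX'.trans hX'k).trans (blockU_mono (by omega) le_rfl))
    refine ⟨W ∪ X, hind, hsub, ?_⟩
    rw [ncard_union_eq ((disjoint_of_subset_left hWk' disjoint_compl_right).mono_right hXk), hWk,
      hXc, ← blockSum_add (lo := j) (mid := k) (hi := k + 1) (by omega) (by omega)]
    omega

lemma exists_isBase_superset (ht : 2 ≤ t) {Y : Set α} (hY : M.Indep Y)
    (hYA : Y ⊆ (blockU E 0 1)ᶜ) (hYl : Y.ncard ≤ blockSum a 1 t) :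
    ∃ B X, M.IsBase B ∧ X ⊆ blockU E 0 1 ∧ X.ncard = blockSum a 0 1 ∧ X ∪ Y ⊆ B := by
  obtain ⟨X', hX', hX'A, hX'c⟩ : ∃ X, M.Indep X ∧ X ⊆ blockU E 0 1 ∧
      X.ncard = blockSum a 0 1 + 1 := hgood.exists_indep_blockU_succ ⟨0, by omega⟩
  obtain ⟨X, hXX', hXc⟩ := exists_subset_card_eq (show blockSum a 0 1 ≤ X'.ncard by omega)
  obtain ⟨B, hB, hXYB⟩ := (hgood.splitsAt (j := 1) le_rfl (by omega) (hX'.subset hXX')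
    (hXX'.trans hX'A) hXc.le hY hYA hYl).exists_isBase_superset
  exact ⟨B, X, hB, hXX'.trans hX'A, hXc, hXYB⟩

lemma exists_isBase_high (ht : 3 ≤ t) : ∃ B, M.IsBase B ∧
    blockSum a 0 1 ≤ (B ∩ blockU E 0 1).ncard ∧ blockSum a 0 2 < (B ∩ blockU E 0 2).ncard := by
  obtain ⟨W, hW, hW12, hWc⟩ := hgood.exists_indep_blockU (j := 1) (k := 2) le_rfl one_lt_two
    (by omega)
  have h12 := blockSum_add (a := a) (lo := 1) (mid := 2) (hi := t) (by omega) (by omega)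
  have h2t := hgood.blockSum_pos (lo := 2) (hi := t) (by omega) le_rfl
  obtain ⟨B, X, hB, hXA, hXc, hXWB⟩ := hgood.exists_isBase_superset (by omega) hW
    (hW12.trans (disjoint_blockU hgood.2.1 le_rfl).subset_compl_left) (by omega)
  refine ⟨B, hB, hXc ▸ ncard_le_ncard (subset_inter (subset_union_left.trans hXWB) hXA), ?_⟩
  have h02 := blockSum_add (a := a) (lo := 0) (mid := 1) (hi := 2) (by omega) (by omega)
  have hXW : (X ∪ W).ncard = blockSum a 0 2 + 1 := by
    rw [ncard_union_eq ((disjoint_blockU hgood.2.1 le_rfl).mono hXA hW12)]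
    omega
  have := ncard_le_ncard (subset_inter hXWB (union_subset
    (hXA.trans (blockU_mono le_rfl (by omega))) (hW12.trans (blockU_mono (by omega) le_rfl))))
  omega

lemma exists_isBase_low (ht : 3 ≤ t) (hrank : mrk M = r) : ∃ B, M.IsBase B ∧
    blockSum a 0 1 ≤ (B ∩ blockU E 0 1).ncard ∧ (B ∩ blockU E 0 2).ncard < blockSum a 0 2 := by
  obtain ⟨W, hW, hW2t, hWc⟩ := hgood.exists_indep_blockU (j := 2) (k := t) (by omega) (by omega)
    le_rfl
  have h12 := blockSum_add (a := a) (lo := 1) (mid := 2) (hi := t) (by omega) (by omega)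
  have h12pos := hgood.blockSum_pos (lo := 1) (hi := 2) (by omega) (by omega)
  obtain ⟨B, X, hB, hXA, hXc, hXWB⟩ := hgood.exists_isBase_superset (by omega) hW
    (hW2t.trans (disjoint_blockU hgood.2.1 (by omega)).subset_compl_left) (by omega)
  refine ⟨B, hB, hXc ▸ ncard_le_ncard (subset_inter (subset_union_left.trans hXWB) hXA), ?_⟩
  have hWB : blockSum a 2 t + 1 ≤ (B ∩ (blockU E 0 2)ᶜ).ncard := hWc ▸ ncard_le_ncard
    (subset_inter (subset_union_right.trans hXWB)
      (hW2t.trans (disjoint_blockU hgood.2.1 le_rfl).subset_compl_left))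
  have := ncard_inter_add_ncard_inter_compl B (blockU E 0 2)
  have := hB.ncard_eq_mrk.trans hrank
  have := hgood.blockSum_add_eq (j := 2) (by omega)
  omega

lemma isBaseCollection_low (ht : 3 ≤ t) (hrank : mrk M = r) :
    IsBaseCollection M.E {B | M.IsBase B ∧ blockSum a 0 1 ≤ (B ∩ blockU E 0 1).ncard ∧
      (B ∩ blockU E 0 2).ncard ≤ blockSum a 0 2} := by
  have hr : ∀ B, M.IsBase B → B.ncard = r := fun B hB => hB.ncard_eq_mrk.trans hrank
  have h₁ := hgood.blockSum_add_eq (j := 1) (by omega)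
  have h₂ := hgood.blockSum_add_eq (j := 2) (by omega)
  -- the upper quota on `E₁ ∪ E₂` is a lower quota on the complementary blocks
  have hcompl : ∀ B, M.IsBase B → ((B ∩ blockU E 0 2).ncard ≤ blockSum a 0 2 ↔
      blockSum a 2 t ≤ (B ∩ (blockU E 0 2)ᶜ).ncard) := fun B hB => by
    have := ncard_inter_add_ncard_inter_compl B (blockU E 0 2)
    have := hr B hB
    omega
  have hset : {B | M.IsBase B ∧ blockSum a 0 1 ≤ (B ∩ blockU E 0 1).ncard ∧
      (B ∩ blockU E 0 2).ncard ≤ blockSum a 0 2} = {B | M.IsBase B ∧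
      blockSum a 0 1 ≤ (B ∩ blockU E 0 1).ncard ∧
      blockSum a 2 t ≤ (B ∩ (blockU E 0 2)ᶜ).ncard} :=
    Set.ext fun B => and_congr_right fun hB => and_congr_right fun _ => hcompl B hB
  obtain ⟨B, hB, hBA, hBAB⟩ := hgood.exists_isBase_low ht hrank
  rw [hset]
  refine isBaseCollection_of_exchangeProperty (exchangeProperty_of_splitsAt
    (hgood.splitsAt le_rfl (by omega)) (hgood.splitsAt (j := 2) (by omega) (by omega)).compl
    (fun B hB => (hr B hB).trans h₁.symm) (fun B hB => (hr B hB).trans (h₂.symm.trans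
    (add_comm _ _))) (.inr (disjoint_compl_right.mono_left (blockU_mono le_rfl (by omega)))))
    ⟨B, hB, hBA, (hcompl B hB).1 hBAB.le⟩ fun B hB => hB.1.subset_ground

lemma isBaseCollection_high (ht : 3 ≤ t) (hrank : mrk M = r) :
    IsBaseCollection M.E {B | M.IsBase B ∧ blockSum a 0 1 ≤ (B ∩ blockU E 0 1).ncard ∧
      blockSum a 0 2 ≤ (B ∩ blockU E 0 2).ncard} := by
  have hr : ∀ B, M.IsBase B → B.ncard = r := fun B hB => hB.ncard_eq_mrk.trans hrank
  have h₁ := hgood.blockSum_add_eq (j := 1) (by omega)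
  have h₂ := hgood.blockSum_add_eq (j := 2) (by omega)
  obtain ⟨B, hB, hBA, hBAB⟩ := hgood.exists_isBase_high ht
  exact isBaseCollection_of_exchangeProperty (exchangeProperty_of_splitsAt
    (hgood.splitsAt le_rfl (by omega)) (hgood.splitsAt (j := 2) (by omega) (by omega))
    (fun B hB => (hr B hB).trans h₁.symm) (fun B hB => (hr B hB).trans h₂.symm)
    (.inl (blockU_mono le_rfl (by omega)))) ⟨B, hB, hBA, hBAB.le⟩ fun B hB => hB.1.subset_ground

end IsGoodPartition

theorem statement4_general {n : ℕ} {t : ℕ} (ht : 3 ≤ t) (M : Matroid (Fin n))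
    (r : ℕ) (hrank : mrk M = r) (E : Fin t → Set (Fin n)) (a : Fin t → ℕ)
    (hgood : IsGoodPartition M r E a)
    (Mbar₁ : Matroid (Fin n))
    (hMbar₁ : ∀ B, Mbar₁.IsBase B ↔ M.IsBase B ∧ blockSum a 0 1 ≤ (B ∩ blockU E 0 1).ncard) :
    IsBaseCollection M.E {B | M.IsBase B ∧ blockSum a 0 1 ≤ (B ∩ blockU E 0 1).ncard ∧
      (B ∩ blockU E 0 2).ncard ≤ blockSum a 0 2} ∧
    IsBaseCollection M.E {B | M.IsBase B ∧ blockSum a 0 1 ≤ (B ∩ blockU E 0 1).ncard ∧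
      blockSum a 0 2 ≤ (B ∩ blockU E 0 2).ncard} ∧
    ∀ M₂ Mbar₂ : Matroid (Fin n), M₂.E = M.E → Mbar₂.E = M.E →
      (∀ B, M₂.IsBase B ↔ M.IsBase B ∧ blockSum a 0 1 ≤ (B ∩ blockU E 0 1).ncard ∧
        (B ∩ blockU E 0 2).ncard ≤ blockSum a 0 2) →
      (∀ B, Mbar₂.IsBase B ↔ M.IsBase B ∧ blockSum a 0 1 ≤ (B ∩ blockU E 0 1).ncard ∧
        blockSum a 0 2 ≤ (B ∩ blockU E 0 2).ncard) →
      (basePolytope Mbar₁ = basePolytope M₂ ∪ basePolytope Mbar₂ ∧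
       basePolytope M₂ ⊂ basePolytope Mbar₁ ∧
       basePolytope Mbar₂ ⊂ basePolytope Mbar₁ ∧
       IsExtreme ℝ (basePolytope M₂) (basePolytope M₂ ∩ basePolytope Mbar₂) ∧
       IsExtreme ℝ (basePolytope Mbar₂) (basePolytope M₂ ∩ basePolytope Mbar₂)) := by
  refine ⟨hgood.isBaseCollection_low ht hrank, hgood.isBaseCollection_high ht hrank,
    fun M₂ Mbar₂ _ _ hM₂ hMbar₂ => ?_⟩
  obtain ⟨Bl, hBl, hBlA, hBlAB⟩ := hgood.exists_isBase_low ht hrank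
  obtain ⟨Bh, hBh, hBhA, hBhAB⟩ := hgood.exists_isBase_high ht
  refine basePolytope_hyperplane_split (d := blockSum a 2 t) (fun B hB => ?_)
    (fun B => by rw [hM₂, hMbar₁, and_assoc]) (fun B => by rw [hMbar₂, hMbar₁, and_assoc])
    ⟨Bl, (hMbar₁ Bl).2 ⟨hBl, hBlA⟩, hBlAB⟩ ⟨Bh, (hMbar₁ Bh).2 ⟨hBh, hBhA⟩, hBhAB⟩
  rw [((hMbar₁ B).1 hB).1.ncard_eq_mrk, hrank, hgood.blockSum_add_eq (by omega)]

/-- for a good `t`-partition (`t ≥ 3`) of `M`, the families `ℬ(M₂)` and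
`ℬ(Mbar₂)` are collections of bases of matroids, and `P(Mbar₁) = P(M₂) ∪ P(Mbar₂)` is a
hyperplane split of `P(Mbar₁)`. (Here `blockU E 0 1 = E₁`, `blockU E 0 2 = E₁ ∪ E₂`,
`blockSum a 0 1 = a₁` and `blockSum a 0 2 = a₁ + a₂`.) -/
theorem statement4 {n : ℕ} {t : ℕ} (ht : 3 ≤ t) (M : Matroid (Fin n)) (hME : M.E = Set.univ)
    (r : ℕ) (hrank : mrk M = r) (E : Fin t → Set (Fin n)) (a : Fin t → ℕ)
    (hgood : IsGoodPartition M r E a)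
    (Mbar₁ : Matroid (Fin n)) (hMbar₁E : Mbar₁.E = M.E)
    (hMbar₁ : ∀ B, Mbar₁.IsBase B ↔ M.IsBase B ∧ blockSum a 0 1 ≤ (B ∩ blockU E 0 1).ncard) :
    IsBaseCollection M.E {B | M.IsBase B ∧ blockSum a 0 1 ≤ (B ∩ blockU E 0 1).ncard ∧
      (B ∩ blockU E 0 2).ncard ≤ blockSum a 0 2} ∧
    IsBaseCollection M.E {B | M.IsBase B ∧ blockSum a 0 1 ≤ (B ∩ blockU E 0 1).ncard ∧
      blockSum a 0 2 ≤ (B ∩ blockU E 0 2).ncard} ∧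
    ∀ M₂ Mbar₂ : Matroid (Fin n), M₂.E = M.E → Mbar₂.E = M.E →
      (∀ B, M₂.IsBase B ↔ M.IsBase B ∧ blockSum a 0 1 ≤ (B ∩ blockU E 0 1).ncard ∧
        (B ∩ blockU E 0 2).ncard ≤ blockSum a 0 2) →
      (∀ B, Mbar₂.IsBase B ↔ M.IsBase B ∧ blockSum a 0 1 ≤ (B ∩ blockU E 0 1).ncard ∧
        blockSum a 0 2 ≤ (B ∩ blockU E 0 2).ncard) →
      (basePolytope Mbar₁ = basePolytope M₂ ∪ basePolytope Mbar₂ ∧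
       basePolytope M₂ ⊂ basePolytope Mbar₁ ∧
       basePolytope Mbar₂ ⊂ basePolytope Mbar₁ ∧
       IsExtreme ℝ (basePolytope M₂) (basePolytope M₂ ∩ basePolytope Mbar₂) ∧
       IsExtreme ℝ (basePolytope Mbar₂) (basePolytope M₂ ∩ basePolytope Mbar₂)) :=
  statement4_general ht M r hrank E a hgood Mbar₁ hMbar₁
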